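/- Let π^s be the unique stationary probability measure of κ. Then for every probability measure μ on A and every n ≥ 1, ‖μκ^n − π^s‖_TV ≤ (1 − ε)^n, where κ^n denotes the n-fold iterate of the kernel; in particular, ‖κ^n(a, ·) − π^s‖_TV ≤ (1 − ε)^n for every initial point a ∈ A, so the n-step distributions converge to π^s in total variation at an exponential rate independent of the starting point. -/

import Mathlib

open MeasureTheory ProbabilityTheory

/-- Total variation distance between two measures:
`‖μ − ν‖_TV = sup {|μ(B) − ν(B)| : B measurable}`. -/
noncomputable def tvDist {α : Type*} [MeasurableSpace α] (μ ν : Measure α) : ℝ :=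
  ⨆ B : {s : Set α // MeasurableSet s}, |(μ B.1).toReal - (ν B.1).toReal|

section Aux

variable {α : Type*} [MeasurableSpace α]

lemma tvDist_comm (μ ν : Measure α) : tvDist μ ν = tvDist ν μ := by
  unfold tvDist
  exact iSup_congr fun B => abs_sub_comm _ _

lemma tvDist_bddAbove (μ ν : Measure α) [IsProbabilityMeasure μ] [IsProbabilityMeasure ν] :
    BddAbove (Set.range fun B : {s : Set α // MeasurableSet s} =>
      |(μ B.1).toReal - (ν B.1).toReal|) := by
  refine ⟨1, ?_⟩
  rintro x ⟨B, rfl⟩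
  have h1 : (μ B.1).toReal ≤ 1 := by
    simpa using ENNReal.toReal_mono (by simp) (prob_le_one (μ := μ) (s := B.1))
  have h2 : (ν B.1).toReal ≤ 1 := by
    simpa using ENNReal.toReal_mono (by simp) (prob_le_one (μ := ν) (s := B.1))
  have h3 : 0 ≤ (μ B.1).toReal := ENNReal.toReal_nonneg
  have h4 : 0 ≤ (ν B.1).toReal := ENNReal.toReal_nonneg
  rw [abs_sub_le_iff]; constructor <;> linarith

lemma abs_le_tvDist (μ ν : Measure α) [IsProbabilityMeasure μ] [IsProbabilityMeasure ν]
    {B : Set α} (hB : MeasurableSet B) :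
    |(μ B).toReal - (ν B).toReal| ≤ tvDist μ ν :=
  le_ciSup (tvDist_bddAbove μ ν) ⟨B, hB⟩

lemma tvDist_nonneg (μ ν : Measure α) [IsProbabilityMeasure μ] [IsProbabilityMeasure ν] :
    0 ≤ tvDist μ ν :=
  le_trans (abs_nonneg _) (abs_le_tvDist μ ν MeasurableSet.empty)

lemma tvDist_le_one (μ ν : Measure α) [IsProbabilityMeasure μ] [IsProbabilityMeasure ν] :
    tvDist μ ν ≤ 1 := by
  refine ciSup_le fun B => ?_
  have h1 : (μ B.1).toReal ≤ 1 := by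
    simpa using ENNReal.toReal_mono (by simp) (prob_le_one (μ := μ) (s := B.1))
  have h2 : (ν B.1).toReal ≤ 1 := by
    simpa using ENNReal.toReal_mono (by simp) (prob_le_one (μ := ν) (s := B.1))
  have h3 : 0 ≤ (μ B.1).toReal := ENNReal.toReal_nonneg
  have h4 : 0 ≤ (ν B.1).toReal := ENNReal.toReal_nonneg
  rw [abs_sub_le_iff]; constructor <;> linarith

lemma isProb_bind (κ : Kernel α α) [IsMarkovKernel κ] (μ : Measure α)
    [IsProbabilityMeasure μ] : IsProbabilityMeasure (μ.bind (κ ·)) := by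
  constructor
  rw [Measure.bind_apply MeasurableSet.univ κ.measurable.aemeasurable]
  simp

theorem step_ineq (κ : Kernel α α) [IsMarkovKernel κ]
    (ν : Measure α) [IsProbabilityMeasure ν]
    (ε : ℝ) (hε0 : 0 < ε) (hε1 : ε ≤ 1)
    (hmin : ∀ a : α, ∀ B : Set α, MeasurableSet B → ENNReal.ofReal ε * ν B ≤ κ a B)
    (μ μ' : Measure α) [IsProbabilityMeasure μ] [IsProbabilityMeasure μ']
    {B : Set α} (hB : MeasurableSet B) :
    ((μ.bind (κ ·)) B).toReal ≤ ((μ'.bind (κ ·)) B).toReal + (1 - ε) * tvDist μ μ' := by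
  classical
  set c : ENNReal := ENNReal.ofReal ε * ν B with hc
  set L : ENNReal := ENNReal.ofReal (1 - ε) with hL
  set f : α → ENNReal := fun a => κ a B with hf
  set g : α → ENNReal := fun a => f a - c with hg
  have hε1' : (0:ℝ) ≤ 1 - ε := by linarith
  have hcf : ∀ a, c ≤ f a := fun a => hmin a B hB
  have hmeasf : Measurable f := κ.measurable_coe hB
  have hmeasg : Measurable g := hmeasf.sub measurable_const
  have hcle : c ≤ 1 := by
    calc c ≤ 1 * 1 := by
            refine mul_le_mul' ?_ prob_le_one
            simpa using ENNReal.ofReal_le_ofReal hε1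
      _ = 1 := by simp
  have hcne : c ≠ ⊤ := ne_top_of_le_ne_top ENNReal.one_ne_top hcle
  -- g ≤ L pointwise
  have hgL : ∀ a, g a ≤ L := by
    intro a
    have hsum : κ a B + κ a Bᶜ = 1 := by
      rw [← measure_union (disjoint_compl_right) hB.compl]
      simp
    have h1 : f a + ENNReal.ofReal ε * ν Bᶜ ≤ 1 := by
      calc f a + ENNReal.ofReal ε * ν Bᶜ ≤ κ a B + κ a Bᶜ :=
            add_le_add le_rfl (hmin a Bᶜ hB.compl)
        _ = 1 := hsum
    have hνsum : ν B + ν Bᶜ = 1 := by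
      rw [← measure_union (disjoint_compl_right) hB.compl]
      simp
    have htot : L + (c + ENNReal.ofReal ε * ν Bᶜ) = 1 := by
      rw [hc, hL, ← mul_add, hνsum, mul_one, ← ENNReal.ofReal_add hε1' hε0.le]
      norm_num
    have h2 : f a ≤ L + c := by
      have : f a + ENNReal.ofReal ε * ν Bᶜ ≤ (L + c) + ENNReal.ofReal ε * ν Bᶜ := by
        rw [add_assoc, htot]; exact h1
      have hxne : ENNReal.ofReal ε * ν Bᶜ ≠ ⊤ := by
        refine ne_top_of_le_ne_top ENNReal.one_ne_top ?_
        calc ENNReal.ofReal ε * ν Bᶜ ≤ 1 * 1 := by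
              refine mul_le_mul' ?_ prob_le_one
              simpa using ENNReal.ofReal_le_ofReal hε1
          _ = 1 := by simp
      exact (ENNReal.add_le_add_iff_right hxne).1 this
    exact tsub_le_iff_right.2 h2
  -- representation of the bind measure
  have hrepr : ∀ (ρ : Measure α) [IsProbabilityMeasure ρ],
      (ρ.bind (κ ·)) B = ∫⁻ a, g a ∂ρ + c := by
    intro ρ _
    rw [Measure.bind_apply hB κ.measurable.aemeasurable]
    have : ∀ a, f a = g a + c := fun a => (tsub_add_cancel_of_le (hcf a)).symm
    calc ∫⁻ a, κ a B ∂ρ = ∫⁻ a, g a + c ∂ρ := lintegral_congr fun a => this a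
      _ = ∫⁻ a, g a ∂ρ + c := by
          rw [lintegral_add_right _ measurable_const]; simp
  -- Hahn decomposition
  obtain ⟨s, hs, hst, hsc⟩ := hahn_decomposition (μ := μ) (ν := μ')
  have hrle : μ'.restrict s ≤ μ.restrict s := by
    refine Measure.le_intro fun t ht _ => ?_
    rw [Measure.restrict_apply ht, Measure.restrict_apply ht]
    exact hst _ (ht.inter hs) Set.inter_subset_right
  have hrle' : μ.restrict sᶜ ≤ μ'.restrict sᶜ := by
    refine Measure.le_intro fun t ht _ => ?_
    rw [Measure.restrict_apply ht, Measure.restrict_apply ht]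
    exact hsc _ (ht.inter hs.compl) Set.inter_subset_right
  set d : Measure α := μ.restrict s - μ'.restrict s with hd
  have hdadd : μ.restrict s = d + μ'.restrict s := by
    rw [hd, Measure.sub_add_cancel_of_le hrle]
  have hduniv : μ' s + d Set.univ = μ s := by
    have := congrArg (fun m : Measure α => m Set.univ) hdadd
    simp only [Measure.add_apply, Measure.restrict_apply MeasurableSet.univ,
      Set.univ_inter] at this
    rw [this]; ring
  -- d(univ) ≤ ofReal (tvDist μ μ')
  have htv0 : 0 ≤ tvDist μ μ' := tvDist_nonneg μ μ'
  have hμs : μ s ≤ μ' s + ENNReal.ofReal (tvDist μ μ') := by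
    have h1 : (μ s).toReal - (μ' s).toReal ≤ tvDist μ μ' :=
      le_trans (le_abs_self _) (abs_le_tvDist μ μ' hs)
    have h2 : (μ s).toReal ≤ (μ' s).toReal + tvDist μ μ' := by linarith
    have := ENNReal.ofReal_le_ofReal h2
    rw [ENNReal.ofReal_toReal (measure_ne_top μ s),
      ENNReal.ofReal_add ENNReal.toReal_nonneg htv0,
      ENNReal.ofReal_toReal (measure_ne_top μ' s)] at this
    exact this
  have hdle : d Set.univ ≤ ENNReal.ofReal (tvDist μ μ') := by
    have : μ' s + d Set.univ ≤ μ' s + ENNReal.ofReal (tvDist μ μ') := by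
      rw [hduniv]; exact hμs
    exact (ENNReal.add_le_add_iff_left (measure_ne_top μ' s)).1 this
  -- main integral chain
  have hchain : ∫⁻ a, g a ∂μ ≤ ∫⁻ a, g a ∂μ' + L * ENNReal.ofReal (tvDist μ μ') := by
    calc ∫⁻ a, g a ∂μ = ∫⁻ a in s, g a ∂μ + ∫⁻ a in sᶜ, g a ∂μ :=
          (lintegral_add_compl g hs).symm
      _ = (∫⁻ a, g a ∂d + ∫⁻ a in s, g a ∂μ') + ∫⁻ a in sᶜ, g a ∂μ := by
          rw [hdadd, lintegral_add_measure]
      _ ≤ (L * d Set.univ + ∫⁻ a in s, g a ∂μ') + ∫⁻ a in sᶜ, g a ∂μ' := by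
          refine add_le_add (add_le_add ?_ le_rfl) (lintegral_mono' hrle' le_rfl)
          calc ∫⁻ a, g a ∂d ≤ ∫⁻ _, L ∂d := lintegral_mono hgL
            _ = L * d Set.univ := lintegral_const L
      _ ≤ L * ENNReal.ofReal (tvDist μ μ') + (∫⁻ a in s, g a ∂μ' + ∫⁻ a in sᶜ, g a ∂μ') := by
          rw [add_assoc]
          exact add_le_add (mul_le_mul' le_rfl hdle) le_rfl
      _ = ∫⁻ a, g a ∂μ' + L * ENNReal.ofReal (tvDist μ μ') := by
          rw [lintegral_add_compl g hs, add_comm]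
  have hfinal : (μ.bind (κ ·)) B ≤ (μ'.bind (κ ·)) B + ENNReal.ofReal ((1 - ε) * tvDist μ μ') := by
    rw [hrepr μ, hrepr μ', ENNReal.ofReal_mul hε1', ← hL]
    calc ∫⁻ a, g a ∂μ + c ≤ (∫⁻ a, g a ∂μ' + L * ENNReal.ofReal (tvDist μ μ')) + c :=
          add_le_add hchain le_rfl
      _ = ∫⁻ a, g a ∂μ' + c + L * ENNReal.ofReal (tvDist μ μ') := by ring
  -- pass to toReal
  have hbind' : IsProbabilityMeasure (μ'.bind (κ ·)) := isProb_bind κ μ'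
  have hne : (μ'.bind (κ ·)) B + ENNReal.ofReal ((1 - ε) * tvDist μ μ') ≠ ⊤ :=
    ENNReal.add_ne_top.2 ⟨measure_ne_top _ _, ENNReal.ofReal_ne_top⟩
  have := ENNReal.toReal_mono hne hfinal
  rwa [ENNReal.toReal_add (measure_ne_top _ _) ENNReal.ofReal_ne_top,
    ENNReal.toReal_ofReal (mul_nonneg hε1' htv0)] at this

theorem tvDist_contract (κ : Kernel α α) [IsMarkovKernel κ]
    (ν : Measure α) [IsProbabilityMeasure ν]
    (ε : ℝ) (hε0 : 0 < ε) (hε1 : ε ≤ 1)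
    (hmin : ∀ a : α, ∀ B : Set α, MeasurableSet B → ENNReal.ofReal ε * ν B ≤ κ a B)
    (μ μ' : Measure α) [IsProbabilityMeasure μ] [IsProbabilityMeasure μ'] :
    tvDist (μ.bind (κ ·)) (μ'.bind (κ ·)) ≤ (1 - ε) * tvDist μ μ' := by
  refine ciSup_le fun B => ?_
  have h1 := step_ineq κ ν ε hε0 hε1 hmin μ μ' B.2
  have h2 := step_ineq κ ν ε hε0 hε1 hmin μ' μ B.2
  rw [tvDist_comm μ' μ] at h2
  rw [abs_sub_le_iff]
  constructor <;> linarith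

end Aux

/-- Under the Doeblin minorization condition, if `π^s` is the unique
stationary probability measure of `κ` then for every probability measure `μ` and every
`n ≥ 1`, `‖μκ^n − π^s‖_TV ≤ (1 − ε)^n`; in particular `‖κ^n(a,·) − π^s‖_TV ≤ (1 − ε)^n`
for every initial point `a`, so the n-step distributions converge to `π^s` in total
variation at an exponential rate independent of the starting point. -/
theorem doeblin_geometric_ergodicity
    {α : Type*} [MeasurableSpace α]
    (κ : Kernel α α) [IsMarkovKernel κ]
    (ν : Measure α) [IsProbabilityMeasure ν]
    (ε : ℝ) (hε0 : 0 < ε) (hε1 : ε ≤ 1)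
    (hmin : ∀ a : α, ∀ B : Set α, MeasurableSet B → ENNReal.ofReal ε * ν B ≤ κ a B)
    (πs : Measure α) [IsProbabilityMeasure πs]
    (hstat : πs.bind (κ ·) = πs) :
    (∀ μ : Measure α, IsProbabilityMeasure μ → ∀ n : ℕ, 1 ≤ n →
        tvDist ((fun m : Measure α => m.bind (κ ·))^[n] μ) πs ≤ (1 - ε) ^ n) ∧
    (∀ a : α, ∀ n : ℕ, 1 ≤ n →
        tvDist ((fun m : Measure α => m.bind (κ ·))^[n] (Measure.dirac a)) πs ≤ (1 - ε) ^ n) := by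
  have hε1' : (0:ℝ) ≤ 1 - ε := by linarith
  have key : ∀ (μ : Measure α), IsProbabilityMeasure μ → ∀ n : ℕ,
      IsProbabilityMeasure ((fun m : Measure α => m.bind (κ ·))^[n] μ) ∧
      tvDist ((fun m : Measure α => m.bind (κ ·))^[n] μ) πs ≤ (1 - ε) ^ n := by
    intro μ hμ n
    induction n with
    | zero =>
        refine ⟨by simpa using hμ, ?_⟩
        simpa using tvDist_le_one μ πs
    | succ n ih =>
        obtain ⟨hprob, hbound⟩ := ih
        have : IsProbabilityMeasure (((fun m : Measure α => m.bind (κ ·))^[n] μ).bind (κ ·)) :=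
          isProb_bind κ _
        rw [Function.iterate_succ_apply']
        refine ⟨this, ?_⟩
        calc tvDist (((fun m : Measure α => m.bind (κ ·))^[n] μ).bind (κ ·)) πs
            = tvDist (((fun m : Measure α => m.bind (κ ·))^[n] μ).bind (κ ·)) (πs.bind (κ ·)) := by
              rw [hstat]
          _ ≤ (1 - ε) * tvDist ((fun m : Measure α => m.bind (κ ·))^[n] μ) πs :=
              tvDist_contract κ ν ε hε0 hε1 hmin _ _
          _ ≤ (1 - ε) * (1 - ε) ^ n := by
              exact mul_le_mul_of_nonneg_left hbound hε1'
          _ = (1 - ε) ^ (n + 1) := by ring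
  refine ⟨fun μ hμ n _ => (key μ hμ n).2, fun a n _ => (key (Measure.dirac a) inferInstance n).2⟩
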